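/- Let X = (X₁,X₂,X₃) ∈ R³ be a nonzero formal vector field and let ω¹, ω², ω³ ∈ R³ be three integrable formal 1-forms that are pairwise independent (for each i ≠ j there are indices p, q with ωⁱ_p·ωʲ_q ≠ ωⁱ_q·ωʲ_p) and each tangent to X (X₁ωⁱ₁ + X₂ωⁱ₂ + X₃ωⁱ₃ = 0 for i = 1,2,3). Then there exist nonzero g₁, g₂, g₃ ∈ R such that g₃·ω³ = g₁·ω¹ + g₂·ω² componentwise and, for every s, t ∈ ℂ, the 1-form s·g₁·ω¹ + t·g₂·ω² is integrable and tangent to X. In particular, a formal vector field tangent to three pairwise independent integrable 1-forms is tangent to a whole pencil of integrable 1-forms. -/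

import Mathlib

/-!
Since `X ≠ 0` is orthogonal to `ω¹, ω², ω³` over the domain `ℂ⟦x₁,x₂,x₃⟧`, the three forms are
coplanar and every cross product `ωⁱ × ωʲ` is parallel to `X`. Fix `k` with `X_k ≠ 0`; the `k`-th
components of the cross products are then nonzero and satisfy the Cramer-type relation
`(ω¹ × ω²)_k ω³ = (ω³ × ω²)_k ω¹ + (ω¹ × ω³)_k ω²`. Finally integrability is a quadratic
condition, so a pencil is integrable as soon as its two generators and their sum are; here the
sum is a multiple of the integrable form `ω³`.
-/


open MvPowerSeries

/-- Formal partial derivative `∂ᵢ` on multivariate formal power series. -/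
noncomputable def pd {n : ℕ} (i : Fin n) (f : MvPowerSeries (Fin n) ℂ) :
    MvPowerSeries (Fin n) ℂ :=
  fun m => ((m i : ℂ) + 1) * MvPowerSeries.coeff (R := ℂ) (m + Finsupp.single i 1) f

/-- A formal 1-form `ω = ω₀ dx₁ + ω₁ dx₂ + ω₂ dx₃` on `(ℂ³,0)` is integrable
(`ω ∧ dω = 0`). -/
def Integrable3 (ω : Fin 3 → MvPowerSeries (Fin 3) ℂ) : Prop :=
  ω 0 * (pd 1 (ω 2) - pd 2 (ω 1)) + ω 1 * (pd 2 (ω 0) - pd 0 (ω 2))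
    + ω 2 * (pd 0 (ω 1) - pd 1 (ω 0)) = 0

/-- The vector field `Xv` is tangent to the 1-form `ω`: `i_X ω = 0`. -/
def Tangent3 (Xv ω : Fin 3 → MvPowerSeries (Fin 3) ℂ) : Prop :=
  Xv 0 * ω 0 + Xv 1 * ω 1 + Xv 2 * ω 2 = 0

/-- Two formal 1-forms are independent: `ω ∧ η ≠ 0`. -/
def Indep3 (ω η : Fin 3 → MvPowerSeries (Fin 3) ℂ) : Prop :=
  ∃ p q : Fin 3, ω p * η q ≠ ω q * η p

open Matrix

theorem pd_eq_pderiv {n : ℕ} (i : Fin n) (f : MvPowerSeries (Fin n) ℂ) :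
    pd i f = pderiv ℂ i f := by
  ext m
  rw [coeff_pderiv, mul_comm]
  rfl

section CrossProduct

variable {R : Type*} [CommRing R]

theorem cross_eq_zero_iff {u v : Fin 3 → R} : u ⨯₃ v = 0 ↔ ∀ p q, u p * v q = u q * v p := by
  simp only [cross_apply, cons_eq_zero_iff, zero_empty, and_true, sub_eq_zero]
  constructor
  · rintro ⟨h12, h20, h01⟩ p q
    fin_cases p <;> fin_cases q <;> grind
  · intro h
    exact ⟨h 1 2, h 2 0, h 0 1⟩

theorem triple_product_smul_eq (u v w e : Fin 3 → R) :
    (u ⬝ᵥ v ⨯₃ w) • e = (e ⬝ᵥ v ⨯₃ w) • u + (e ⬝ᵥ w ⨯₃ u) • v + (e ⬝ᵥ u ⨯₃ v) • w := by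
  ext p
  fin_cases p <;>
  · simp only [cross_apply, dotProduct, Fin.sum_univ_three, cons_val_zero, cons_val_one, cons_val,
      Fin.zero_eta, Fin.mk_one, Fin.reduceFinMk, Pi.add_apply, Pi.smul_apply, smul_eq_mul]
    ring

theorem cross_apply_smul_eq_of_triple_product_eq_zero {u v w : Fin 3 → R}
    (h : u ⬝ᵥ v ⨯₃ w = 0) (k : Fin 3) : (u ⨯₃ v) k • w = (w ⨯₃ v) k • u + (u ⨯₃ w) k • v := by
  have := triple_product_smul_eq u v w (Pi.single k 1)
  rw [h, zero_smul] at this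
  simp only [single_one_dotProduct] at this
  rw [← cross_anticomm v w, ← cross_anticomm w u, Pi.neg_apply, Pi.neg_apply, neg_smul, neg_smul]
  linear_combination (norm := module) -this

theorem triple_product_eq_zero_of_dotProduct_eq_zero [IsDomain R] {x u v w : Fin 3 → R}
    (hx : x ≠ 0) (hu : x ⬝ᵥ u = 0) (hv : x ⬝ᵥ v = 0) (hw : x ⬝ᵥ w = 0) : u ⬝ᵥ v ⨯₃ w = 0 := by
  rw [triple_product_eq_det]
  exact (exists_mulVec_eq_zero_iff (M := of ![u, v, w])).mp
    ⟨x, hx, by simp [cons_mulVec, dotProduct_comm _ x, hu, hv, hw]⟩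

theorem cross_apply_ne_zero [NoZeroDivisors R] {x u v : Fin 3 → R} {k : Fin 3} (hk : x k ≠ 0)
    (hu : x ⬝ᵥ u = 0) (hv : x ⬝ᵥ v = 0) (huv : u ⨯₃ v ≠ 0) : (u ⨯₃ v) k ≠ 0 := by
  have hpar : x ⨯₃ (u ⨯₃ v) = 0 := by
    rw [cross_cross_eq_smul_sub_smul', dotProduct_comm u, hu, hv, zero_smul, zero_smul, sub_zero]
  intro h
  refine huv (funext fun p => ?_)
  have := cross_eq_zero_iff.mp hpar p k
  rw [h, mul_zero] at this
  exact (mul_eq_zero.mp this.symm).resolve_left hk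

end CrossProduct

theorem tangent3_iff {X ω : Fin 3 → MvPowerSeries (Fin 3) ℂ} : Tangent3 X ω ↔ X ⬝ᵥ ω = 0 := by
  rw [Tangent3, dotProduct, Fin.sum_univ_three]

theorem indep3_iff {ω η : Fin 3 → MvPowerSeries (Fin 3) ℂ} : Indep3 ω η ↔ ω ⨯₃ η ≠ 0 := by
  simp [Indep3, cross_eq_zero_iff]

theorem Integrable3.mul_left {ω : Fin 3 → MvPowerSeries (Fin 3) ℂ} (hω : Integrable3 ω)
    (g : MvPowerSeries (Fin 3) ℂ) : Integrable3 (fun p => g * ω p) := by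
  unfold Integrable3 at hω ⊢
  simp only [pd_eq_pderiv, Derivation.leibniz, smul_eq_mul] at hω ⊢
  linear_combination g ^ 2 * hω

/-- For constants `s, t` the integrability condition is a quadratic form,
`I(s ω + t η) = s² I(ω) + t² I(η) + s t B(ω, η)`, and `I(ω + η) = 0` forces `B(ω, η) = 0`. -/
theorem Integrable3.C_mul_add_C_mul {ω η : Fin 3 → MvPowerSeries (Fin 3) ℂ}
    (hω : Integrable3 ω) (hη : Integrable3 η) (hωη : Integrable3 (fun p => ω p + η p))
    (s t : ℂ) : Integrable3 (fun p => C s * ω p + C t * η p) := by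
  unfold Integrable3 at hω hη hωη ⊢
  simp only [pd_eq_pderiv, map_add, Derivation.leibniz, pderiv_C, smul_eq_mul, mul_zero,
    add_zero] at hω hη hωη ⊢
  linear_combination (C s ^ 2 - C s * C t) * hω + (C t ^ 2 - C s * C t) * hη + C s * C t * hωη

/-- A formal vector field tangent to three pairwise independent integrable 1-forms
is tangent to a whole pencil of integrable 1-forms. -/
theorem tangent_to_three_implies_tangent_to_pencil
    (Xv : Fin 3 → MvPowerSeries (Fin 3) ℂ) (hX : Xv ≠ 0)
    (ω₁ ω₂ ω₃ : Fin 3 → MvPowerSeries (Fin 3) ℂ)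
    (hi₁ : Integrable3 ω₁) (hi₂ : Integrable3 ω₂) (hi₃ : Integrable3 ω₃)
    (h12 : Indep3 ω₁ ω₂) (h13 : Indep3 ω₁ ω₃) (h23 : Indep3 ω₂ ω₃)
    (ht₁ : Tangent3 Xv ω₁) (ht₂ : Tangent3 Xv ω₂) (ht₃ : Tangent3 Xv ω₃) :
    ∃ g₁ g₂ g₃ : MvPowerSeries (Fin 3) ℂ, g₁ ≠ 0 ∧ g₂ ≠ 0 ∧ g₃ ≠ 0 ∧
      (∀ p : Fin 3, g₃ * ω₃ p = g₁ * ω₁ p + g₂ * ω₂ p) ∧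
      (∀ s t : ℂ,
        Integrable3 (fun p => C (σ := Fin 3) (R := ℂ) s * (g₁ * ω₁ p) + C (σ := Fin 3) (R := ℂ) t * (g₂ * ω₂ p)) ∧
        Tangent3 Xv (fun p => C (σ := Fin 3) (R := ℂ) s * (g₁ * ω₁ p) + C (σ := Fin 3) (R := ℂ) t * (g₂ * ω₂ p))) := by
  have : IsDomain (MvPowerSeries (Fin 3) ℂ) := NoZeroDivisors.to_isDomain _
  obtain ⟨k, hk⟩ := Function.ne_iff.mp hX
  have hcoplanar : ω₁ ⬝ᵥ ω₂ ⨯₃ ω₃ = 0 := triple_product_eq_zero_of_dotProduct_eq_zero hX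
    (tangent3_iff.mp ht₁) (tangent3_iff.mp ht₂) (tangent3_iff.mp ht₃)
  have hdecomp : ∀ p, (ω₁ ⨯₃ ω₂) k * ω₃ p = (ω₃ ⨯₃ ω₂) k * ω₁ p + (ω₁ ⨯₃ ω₃) k * ω₂ p :=
    congr_fun (cross_apply_smul_eq_of_triple_product_eq_zero hcoplanar k)
  have hg {u v} (hu : Tangent3 Xv u) (hv : Tangent3 Xv v) (huv : Indep3 u v) : (u ⨯₃ v) k ≠ 0 :=
    cross_apply_ne_zero hk (tangent3_iff.mp hu) (tangent3_iff.mp hv) (indep3_iff.mp huv)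
  refine ⟨_, _, _, ?_, hg ht₁ ht₃ h13, hg ht₁ ht₂ h12, hdecomp, fun s t => ⟨?_, ?_⟩⟩
  · rw [← cross_anticomm, Pi.neg_apply, neg_ne_zero]
    exact hg ht₂ ht₃ h23
  · refine hi₁.mul_left _ |>.C_mul_add_C_mul (hi₂.mul_left _) ?_ s t
    simpa only [← hdecomp] using hi₃.mul_left ((ω₁ ⨯₃ ω₂) k)
  · unfold Tangent3 at ht₁ ht₂ ⊢
    linear_combination C s * (ω₃ ⨯₃ ω₂) k * ht₁ + C t * (ω₁ ⨯₃ ω₃) k * ht₂
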